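/- arXiv:1409.5175 — 4 statements merged into one kernel-verified Lean document; each statement's English description precedes it below -/
import Mathlib

section
/- Every finite simple graph G satisfies Δ(G) ≤ χ₁(G) ≤ Δ(G) + 1, where Δ(G) is the maximum vertex degree and χ₁(G) is the chromatic index (Vizing's theorem together with the trivial lower bound). -/
/-!
The lower bound holds because the edges at a vertex of maximum degree get distinct colors.

For the upper bound (the Misra–Gries fan argument), color the edges one at a time with `Δ + 1`
colors, so that every vertex always misses some color. To color an uncolored edge `x y₀`, take
a maximal fan `y₀, …, y_k` at `x`: distinct neighbours of `x` such that the color of `x yᵢ₊₁` is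
missing at `yᵢ`. Let `β` be missing at `y_k` and `α` at `x`. If `β` is missing at `x` as well,
rotate the fan (move the color of each `x yᵢ₊₁` to `x yᵢ`) and color `x y_k` with `β`. Otherwise,
by maximality, `β` is the color of a fan edge `x yₜ₊₁`, so it is missing at `yₜ`. In the
`α`/`β` subgraph every vertex has degree at most 2, and `x`, `yₜ`, `y_k` have degree at most 1,
so a connected component cannot contain all three. Swapping `α` and `β` on the component of `x`
makes `β` missing at `x` and keeps it missing at whichever of `yₜ`, `y_k` lies outside that
component. The fan, cut off at that vertex, can then be rotated.
-/

namespace Colorful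

/-- A proper edge coloring of `G` with `k` colors: distinct edges sharing a
vertex receive distinct colors. -/
def ProperEdgeColoring {V : Type*} (G : SimpleGraph V) (k : ℕ)
    (f : Sym2 V → Fin k) : Prop :=
  ∀ e ∈ G.edgeSet, ∀ e' ∈ G.edgeSet, e ≠ e' → (∃ v, v ∈ e ∧ v ∈ e') → f e ≠ f e'

/-- The chromatic index `χ₁(G)`: the least number of colors in a proper edge
coloring of `G`. -/
noncomputable def chromIndex {V : Type*} (G : SimpleGraph V) : ℕ :=
  sInf {k | ∃ f : Sym2 V → Fin k, ProperEdgeColoring G k f}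

open SimpleGraph Function

section Coloring

variable {V : Type*} {G H : SimpleGraph V} {N : ℕ} {c : Sym2 V → Option (Fin N)}
  {v w x : V} {a α β : Fin N}

section Degree

lemma _root_.SimpleGraph.Connected.card_le_two_of_degree_le_one {W : Type*} [Fintype W]
    {K : SimpleGraph W} [DecidableRel K.Adj] (hK : K.Connected) (h2 : ∀ v, K.degree v ≤ 2)
    {S : Finset W} (hS : ∀ v ∈ S, K.degree v ≤ 1) : S.card ≤ 2 := by
  classical
  have hsum : ∑ v, (K.degree v + if v ∈ S then 1 else 0) ≤ ∑ _v : W, 2 :=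
    Finset.sum_le_sum fun v _ => by split_ifs with hv <;> grind
  rw [Finset.sum_add_distrib, sum_degrees_eq_twice_card_edges, Finset.sum_ite_mem,
    Finset.univ_inter, Finset.sum_const, Finset.sum_const, Finset.card_univ, smul_eq_mul,
    smul_eq_mul, mul_one] at hsum
  have hedges := hK.card_vert_le_card_edgeSet_add_one
  rw [Nat.card_eq_fintype_card, Nat.card_eq_fintype_card, ← edgeFinset_card] at hedges
  omega

variable [Fintype V] [DecidableEq V] [DecidableRel H.Adj]

lemma not_reachable_of_degree_le_one (h2 : ∀ v, H.degree v ≤ 2) {u w : V} (hxu : x ≠ u)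
    (hxw : x ≠ w) (huw : u ≠ w) (hx : H.degree x ≤ 1) (hu : H.degree u ≤ 1)
    (hw : H.degree w ≤ 1) (hru : H.Reachable x u) : ¬H.Reachable x w := by
  intro hrw
  set C := H.connectedComponentMk x
  have hC : (H.induce C.supp).Connected := C.connected_toSimpleGraph
  have hdeg (v : C.supp) : (H.induce C.supp).degree v ≤ H.degree v :=
    (Copy.induce H C.supp).degree_le v
  have := hC.card_le_two_of_degree_le_one (fun v => (hdeg v).trans (h2 v))
    (S := {⟨x, rfl⟩, ⟨u, (ConnectedComponent.sound hru).symm⟩,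
      ⟨w, (ConnectedComponent.sound hrw).symm⟩})
    (by simp only [Finset.mem_insert, Finset.mem_singleton]
        rintro v (rfl | rfl | rfl) <;> exact (hdeg _).trans ‹_›)
  rw [Finset.card_eq_three.2 ⟨_, _, _, mt (congrArg Subtype.val) hxu,
    mt (congrArg Subtype.val) hxw, mt (congrArg Subtype.val) huw, rfl⟩] at this
  omega

end Degree

section PartialColoring

/-- Partial edge colorings are maps `Sym2 V → Option (Fin N)`, with `none` on uncolored edges. -/
def IsProper (G : SimpleGraph V) (c : Sym2 V → Option (Fin N)) : Prop :=
  ∀ ⦃v w w' a⦄, G.Adj v w → G.Adj v w' → c s(v, w) = some a → c s(v, w') = some a → w = w'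

def IsMissing (G : SimpleGraph V) (c : Sym2 V → Option (Fin N)) (v : V) (a : Fin N) : Prop :=
  ∀ w, G.Adj v w → c s(v, w) ≠ some a

def coloredEdges (c : Sym2 V → Option (Fin N)) : Set (Sym2 V) :=
  {e | c e ≠ none}

lemma isProper_none : IsProper G (fun _ => (none : Option (Fin N))) := by
  simp [IsProper]

lemma IsProper.mono (hc : IsProper G c) (h : H ≤ G) : IsProper H c :=
  fun _ _ _ _ hw hw' => hc (h hw) (h hw')

lemma IsProper.degree_le (hc : IsProper G c) [Fintype (G.neighborSet v)] {s : Finset (Fin N)}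
    (hs : ∀ w, G.Adj v w → ∃ a ∈ s, c s(v, w) = some a) : G.degree v ≤ s.card := by
  rw [← card_neighborFinset_eq_degree, ← s.card_map .some]
  refine Finset.card_le_card_of_injOn (fun w => c s(v, w)) (fun w hw => ?_)
    fun w hw w' hw' h => ?_
  · obtain ⟨a, ha, hca⟩ := hs w ((mem_neighborFinset ..).1 hw)
    simpa [hca] using ha
  · obtain ⟨a, -, hca⟩ := hs w ((mem_neighborFinset ..).1 hw)
    exact hc ((mem_neighborFinset ..).1 hw) ((mem_neighborFinset ..).1 hw') hca (h.symm.trans hca)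

lemma exists_isMissing [Fintype (G.neighborSet v)] (h : G.degree v < N) :
    ∃ a, IsMissing G c v a := by
  by_contra! hc
  have : (Finset.univ.map (.some : Fin N ↪ Option (Fin N))).card ≤ (G.neighborFinset v).card := by
    refine Finset.card_le_card_of_surjOn (fun w => c s(v, w)) fun o ho => ?_
    obtain ⟨a, -, rfl⟩ := Finset.mem_map.1 ho
    simpa [IsMissing] using hc a
  rw [Finset.card_map, Finset.card_univ, Fintype.card_fin, card_neighborFinset_eq_degree] at this
  omega

lemma ProperEdgeColoring.isProper {f : Sym2 V → Fin N} (hf : ProperEdgeColoring G N f) :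
    IsProper G (fun e => some (f e)) := by
  intro v w w' a hw hw' h h'
  by_contra hne
  exact hf _ hw _ hw' (mt Sym2.congr_right.1 hne) ⟨v, Sym2.mem_mk_left v w, Sym2.mem_mk_left v w'⟩
    (Option.some.inj (h.trans h'.symm))

lemma ProperEdgeColoring.maxDegree_le [Fintype V] [DecidableRel G.Adj] {f : Sym2 V → Fin N}
    (hf : ProperEdgeColoring G N f) : G.maxDegree ≤ N :=
  G.maxDegree_le_of_forall_degree_le _ fun _ =>
    (hf.isProper.degree_le (s := Finset.univ) fun _ _ => ⟨_, Finset.mem_univ _, rfl⟩).trans_eq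
      (Finset.card_fin N)

lemma IsProper.properEdgeColoring_getD (hc : IsProper G c) (hG : G.edgeSet ⊆ coloredEdges c)
    (a₀ : Fin N) : ProperEdgeColoring G N fun e => (c e).getD a₀ := by
  rintro e he e' he' hne ⟨v, hv, hv'⟩ heq
  obtain ⟨w, rfl⟩ := Sym2.mem_iff_exists.1 hv
  obtain ⟨w', rfl⟩ := Sym2.mem_iff_exists.1 hv'
  obtain ⟨a, ha⟩ := Option.ne_none_iff_exists'.1 (hG he)
  obtain ⟨a', ha'⟩ := Option.ne_none_iff_exists'.1 (hG he')
  simp only [ha, ha', Option.getD_some] at heq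
  exact hne (congrArg _ (hc he he' ha (heq ▸ ha')))

variable [DecidableEq V] {y : V}

lemma coloredEdges_update_none (e : Sym2 V) :
    coloredEdges (update c e none) = coloredEdges c \ {e} := by
  ext e'
  by_cases h : e' = e <;> simp [coloredEdges, h]

lemma coloredEdges_update_some (e : Sym2 V) (a : Fin N) :
    coloredEdges (update c e (some a)) = insert e (coloredEdges c) := by
  ext e'
  by_cases h : e' = e <;> simp [coloredEdges, h]

lemma IsMissing.update (h : IsMissing G c v a) {e : Sym2 V} {o : Option (Fin N)}
    (ho : o ≠ some a) : IsMissing G (Function.update c e o) v a := by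
  intro w hw
  by_cases he : s(v, w) = e
  · simpa [he] using ho
  · simpa [he] using h w hw

lemma IsMissing.update_of_notMem (h : IsMissing G c v a) {e : Sym2 V} (hv : v ∉ e)
    (o : Option (Fin N)) : IsMissing G (Function.update c e o) v a := by
  intro w hw
  rw [update_of_ne (by rintro rfl; exact hv (Sym2.mem_mk_left v w))]
  exact h w hw

lemma IsProper.isMissing_update_none (hc : IsProper G c) (hxy : G.Adj x y)
    (h : c s(x, y) = some a) : IsMissing G (update c s(x, y) none) x a := by
  intro w hw hwa
  obtain rfl : w = y := by
    by_contra hne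
    rw [update_of_ne fun h => hne (Sym2.congr_right.1 h)] at hwa
    exact hne (hc hw hxy hwa h)
  simp at hwa

lemma IsProper.update_none (hc : IsProper G c) (e : Sym2 V) : IsProper G (update c e none) := by
  have key : ∀ {e' a}, update c e none e' = some a → c e' = some a := fun {e' a} h => by
    by_cases he : e' = e <;> simp_all
  exact fun v w w' a hw hw' h h' => hc hw hw' (key h) (key h')

lemma IsProper.update_some (hc : IsProper G c) (hx : IsMissing G c x a) (hy : IsMissing G c y a) :
    IsProper G (update c s(x, y) (some a)) := by
  have missing : ∀ {v w}, s(v, w) = s(x, y) → IsMissing G c v a := fun {v w} h => by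
    rcases Sym2.mem_iff.1 (h ▸ Sym2.mem_mk_left v w) with rfl | rfl
    exacts [hx, hy]
  intro v w w' b hw hw' h h'
  by_cases he : s(v, w) = s(x, y) <;> by_cases he' : s(v, w') = s(x, y)
  · exact Sym2.congr_right.1 (he.trans he'.symm)
  · rw [update_of_ne he'] at h'
    simp only [he, update_self, Option.some.injEq] at h
    exact absurd h' (h ▸ missing he w' hw')
  · rw [update_of_ne he] at h
    simp only [he', update_self, Option.some.injEq] at h'
    exact absurd h (h' ▸ missing he' w hw)
  · rw [update_of_ne he] at h
    rw [update_of_ne he'] at h'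
    exact hc hw hw' h h'

end PartialColoring

section Kempe

def kempeGraph (G : SimpleGraph V) (c : Sym2 V → Option (Fin N)) (α β : Fin N) :
    SimpleGraph V where
  Adj v w := G.Adj v w ∧ (c s(v, w) = some α ∨ c s(v, w) = some β)
  symm := ⟨fun v w h => by rwa [Sym2.eq_swap, G.adj_comm]⟩
  loopless := ⟨fun v h => G.loopless.irrefl v h.1⟩

lemma kempeGraph_le : kempeGraph G c α β ≤ G := fun _ _ h => h.1

lemma IsProper.degree_kempeGraph_le_two [Fintype V] [DecidableRel (kempeGraph G c α β).Adj]
    (hc : IsProper G c) : (kempeGraph G c α β).degree v ≤ 2 :=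
  ((hc.mono kempeGraph_le).degree_le (s := {α, β}) fun _ h => by
    rcases h.2 with h | h <;> simp [h]).trans Finset.card_le_two

lemma IsProper.degree_kempeGraph_le_one [Fintype V] [DecidableRel (kempeGraph G c α β).Adj]
    (hc : IsProper G c) (hv : IsMissing G c v α ∨ IsMissing G c v β) :
    (kempeGraph G c α β).degree v ≤ 1 := by
  rcases hv with hv | hv
  · simpa using (hc.mono kempeGraph_le).degree_le (s := {β}) fun w h =>
      ⟨β, by simp, h.2.resolve_left (hv w h.1)⟩
  · simpa using (hc.mono kempeGraph_le).degree_le (s := {α}) fun w h =>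
      ⟨α, by simp, h.2.resolve_right (hv w h.1)⟩

open scoped Classical in
noncomputable def kempeSwap (G : SimpleGraph V) (c : Sym2 V → Option (Fin N)) (x : V)
    (α β : Fin N) : Sym2 V → Option (Fin N) := fun e =>
  if ∃ v ∈ e, (kempeGraph G c α β).Reachable x v then (c e).map (Equiv.swap α β) else c e

lemma map_swap_eq_self {γ : Type*} [DecidableEq γ] {o : Option γ} {a b : γ} (ha : o ≠ some a)
    (hb : o ≠ some b) : o.map (Equiv.swap a b) = o := by
  cases o with
  | none => rfl
  | some d => simpa using Equiv.swap_apply_of_ne_of_ne (by simpa using ha) (by simpa using hb)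

lemma kempeSwap_of_reachable (h : (kempeGraph G c α β).Reachable x v) (w : V) :
    kempeSwap G c x α β s(v, w) = (c s(v, w)).map (Equiv.swap α β) :=
  if_pos ⟨v, Sym2.mem_mk_left v w, h⟩

lemma kempeSwap_of_not_reachable (h : ¬(kempeGraph G c α β).Reachable x v) (hvw : G.Adj v w) :
    kempeSwap G c x α β s(v, w) = c s(v, w) := by
  by_cases hab : c s(v, w) = some α ∨ c s(v, w) = some β
  · -- `v w` is an edge of the `α`/`β` subgraph, so `w` is not reachable either
    refine if_neg fun ⟨u, hu, hxu⟩ => ?_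
    rcases Sym2.mem_iff.1 hu with rfl | rfl
    exacts [h hxu, h (hxu.trans (Adj.reachable ⟨hvw.symm, by rwa [Sym2.eq_swap]⟩))]
  · rw [not_or] at hab
    unfold kempeSwap
    split_ifs
    exacts [map_swap_eq_self hab.1 hab.2, rfl]

lemma coloredEdges_kempeSwap : coloredEdges (kempeSwap G c x α β) = coloredEdges c := by
  ext e
  simp only [coloredEdges, kempeSwap, Set.mem_ofPred_eq]
  split_ifs <;> simp

lemma IsProper.kempeSwap (hc : IsProper G c) : IsProper G (kempeSwap G c x α β) := by
  intro v w w' a hw hw' h h'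
  by_cases hr : (kempeGraph G c α β).Reachable x v
  · rw [kempeSwap_of_reachable hr, Option.map_eq_some_iff] at h h'
    obtain ⟨b, hb, rfl⟩ := h
    obtain ⟨b', hb', hbb'⟩ := h'
    exact hc hw hw' hb (Equiv.injective _ hbb' ▸ hb')
  · rw [kempeSwap_of_not_reachable hr hw] at h
    rw [kempeSwap_of_not_reachable hr hw'] at h'
    exact hc hw hw' h h'

lemma isMissing_kempeSwap_of_reachable (h : (kempeGraph G c α β).Reachable x v) :
    IsMissing G (kempeSwap G c x α β) v a ↔ IsMissing G c v (Equiv.swap α β a) := by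
  simp [IsMissing, kempeSwap_of_reachable h, Equiv.swap_apply_eq_iff]

lemma isMissing_kempeSwap_of_not_reachable (h : ¬(kempeGraph G c α β).Reachable x v) :
    IsMissing G (kempeSwap G c x α β) v a ↔ IsMissing G c v a :=
  forall₂_congr fun _ hw => by rw [kempeSwap_of_not_reachable h hw]

end Kempe

section Fan

structure IsFan (G : SimpleGraph V) (c : Sym2 V → Option (Fin N)) (x : V) (y : ℕ → V) (k : ℕ) :
    Prop where
  adj : ∀ i ≤ k, G.Adj x (y i)
  injOn : Set.InjOn y (Set.Iic k)
  uncolored : c s(x, y 0) = none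
  isMissing_succ : ∀ i < k, ∃ a, c s(x, y (i + 1)) = some a ∧ IsMissing G c (y i) a

variable {y : ℕ → V} {k m : ℕ}

lemma IsFan.mono (hF : IsFan G c x y k) (hm : m ≤ k) : IsFan G c x y m where
  adj i hi := hF.adj i (hi.trans hm)
  injOn := hF.injOn.mono (Set.Iic_subset_Iic.2 hm)
  uncolored := hF.uncolored
  isMissing_succ i hi := hF.isMissing_succ i (hi.trans_le hm)

lemma IsFan.sym2_ne (hF : IsFan G c x y k) {i j : ℕ} (hi : i ≤ k) (hj : j ≤ k) (hij : i ≠ j) :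
    s(x, y i) ≠ s(x, y j) :=
  fun h => hij (hF.injOn (Set.mem_Iic.2 hi) (Set.mem_Iic.2 hj) (Sym2.congr_right.1 h))

lemma IsFan.notMem_sym2 (hF : IsFan G c x y k) {i j : ℕ} (hi : i ≤ k) (hj : j ≤ k)
    (hij : i ≠ j) : y i ∉ s(x, y j) := by
  rw [Sym2.mem_iff, not_or]
  exact ⟨(hF.adj i hi).ne', fun h => hij (hF.injOn (Set.mem_Iic.2 hi) (Set.mem_Iic.2 hj) h)⟩

lemma IsFan.lt_card [Fintype V] (hF : IsFan G c x y k) : k < Fintype.card V := by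
  simpa using Finset.card_le_card_of_injOn y (fun _ _ => Finset.mem_univ _)
    (hF.injOn.mono fun i hi => Nat.lt_succ_iff.1 (Finset.mem_range.1 hi))

lemma IsFan.snoc [DecidableEq V] (hF : IsFan G c x y k) {z : V} (hxz : G.Adj x z)
    (hz : c s(x, z) = some a) (ha : IsMissing G c (y k) a) (hzy : ∀ i ≤ k, y i ≠ z) :
    IsFan G c x (update y (k + 1) z) (k + 1) := by
  have hy : ∀ i ≤ k, update y (k + 1) z i = y i := fun i hi => update_of_ne (by omega) _ _
  refine ⟨fun i hi => ?_, fun i hi j hj hij => ?_, ?_, fun i hi => ?_⟩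
  · rcases hi.lt_or_eq with hi | rfl
    · exact hy i (by omega) ▸ hF.adj i (by omega)
    · simpa using hxz
  · simp only [Set.mem_Iic] at hi hj
    rcases hi.lt_or_eq with hi | rfl <;> rcases hj.lt_or_eq with hj | rfl
    · rw [hy i (by omega), hy j (by omega)] at hij
      exact hF.injOn (Set.mem_Iic.2 (by omega)) (Set.mem_Iic.2 (by omega)) hij
    · exact absurd (by simpa [hy i (by omega)] using hij) (hzy i (by omega))
    · exact absurd (by simpa [hy j (by omega)] using hij.symm) (hzy j (by omega))
    · rfl
  · simpa [hy 0 (by omega)] using hF.uncolored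
  · rcases Nat.lt_succ_iff.1 hi |>.lt_or_eq with hi | rfl
    · simpa [hy i (by omega), hy (i + 1) (by omega)] using hF.isMissing_succ i hi
    · exact ⟨a, by simpa using hz, by simpa [hy i le_rfl] using ha⟩

lemma exists_maximal_isFan [Fintype V] (hxw : G.Adj x w) (hw : c s(x, w) = none) :
    ∃ y k, y 0 = w ∧ IsFan G c x y k ∧
      ∀ z a, G.Adj x z → c s(x, z) = some a → IsMissing G c (y k) a → ∃ i ≤ k, y i = z := by
  classical
  let P k := ∃ y, y 0 = w ∧ IsFan G c x y k
  have hP0 : P 0 := ⟨fun _ => w, rfl, fun _ _ => hxw,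
    fun _ hi _ hj _ => (Nat.le_zero.1 hi).trans (Nat.le_zero.1 hj).symm, hw, by simp⟩
  obtain ⟨y, hy0, hF⟩ := Nat.findGreatest_spec (Nat.zero_le _) hP0 (P := P) (n := Fintype.card V)
  refine ⟨y, _, hy0, hF, fun z a hxz hz ha => ?_⟩
  by_contra! hzy
  have hF' := hF.snoc hxz hz ha hzy
  exact Nat.findGreatest_is_greatest (P := P) (Nat.lt_succ_self _) hF'.lt_card.le
    ⟨_, by simpa using hy0, hF'⟩

/-- Rotating the fan: one step moves the color of `x (y 1)` to `x (y 0)`, leaving the fan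
`y 1, …, y k`. -/
lemma IsFan.exists_isProper_insert [DecidableEq V] (hc : IsProper G c) (hF : IsFan G c x y k)
    (hx : IsMissing G c x β) (hk : IsMissing G c (y k) β) :
    ∃ c' : Sym2 V → Option (Fin N), IsProper G c' ∧
      insert s(x, y 0) (coloredEdges c) ⊆ coloredEdges c' := by
  induction k generalizing c y with
  | zero => exact ⟨_, hc.update_some hx hk, (coloredEdges_update_some _ _).ge⟩
  | succ k ih =>
    obtain ⟨a, ha, hay⟩ := hF.isMissing_succ 0 k.succ_pos
    have hβa : β ≠ a := fun h => hx _ (hF.adj 1 (by omega)) (h ▸ ha)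
    set c₁ := update (update c s(x, y 1) none) s(x, y 0) (some a)
    have hc₁ : IsProper G c₁ := (hc.update_none _).update_some
      (hc.isMissing_update_none (hF.adj 1 (by omega)) ha) (hay.update (by simp))
    have hF₁ : IsFan G c₁ x (fun i => y (i + 1)) k := by
      refine ⟨fun i hi => hF.adj _ (by omega), fun i hi j hj h => ?_, ?_, fun i hi => ?_⟩
      · rw [Set.mem_Iic] at hi hj
        simpa using hF.injOn (Set.mem_Iic.2 (by omega)) (Set.mem_Iic.2 (by omega)) h
      · simp [c₁, update_of_ne (hF.sym2_ne (i := 1) (j := 0) (by omega) (by omega) (by omega))]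
      · obtain ⟨b, hb, hby⟩ := hF.isMissing_succ (i + 1) (by omega)
        refine ⟨b, ?_, (hby.update (by simp)).update_of_notMem
          (hF.notMem_sym2 (by omega) (Nat.zero_le _) (by omega)) _⟩
        simpa only [c₁, update_of_ne (hF.sym2_ne (i := i + 1 + 1) (j := 0) (by omega) (by omega)
          (by omega)), update_of_ne (hF.sym2_ne (i := i + 1 + 1) (j := 1) (by omega) (by omega)
          (by omega))] using hb
    obtain ⟨c', hc', hsub⟩ := ih hc₁ hF₁ ((hx.update (by simp)).update (by simpa using hβa.symm))
      ((hk.update (by simp)).update_of_notMem (hF.notMem_sym2 le_rfl (Nat.zero_le _) (by omega)) _)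
    refine ⟨c', hc', subset_trans ?_ hsub⟩
    rw [coloredEdges_update_some, coloredEdges_update_none]
    intro e
    by_cases e = s(x, y 1) <;> simp_all

lemma IsFan.kempeSwap (hF : IsFan G c x y k) (hα : IsMissing G c x α)
    (hβ : ∀ i < k, ¬(kempeGraph G c α β).Reachable x (y i) → c s(x, y (i + 1)) ≠ some β) :
    IsFan G (kempeSwap G c x α β) x y k := by
  refine ⟨hF.adj, hF.injOn, ?_, fun i hi => ?_⟩
  · simp [kempeSwap_of_reachable .rfl, hF.uncolored]
  obtain ⟨b, hb, hby⟩ := hF.isMissing_succ i hi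
  refine ⟨Equiv.swap α β b, by simp [kempeSwap_of_reachable .rfl, hb], ?_⟩
  by_cases hr : (kempeGraph G c α β).Reachable x (y i)
  · simpa [isMissing_kempeSwap_of_reachable hr] using hby
  · rwa [isMissing_kempeSwap_of_not_reachable hr, Equiv.swap_apply_of_ne_of_ne]
    · rintro rfl
      exact hα _ (hF.adj _ hi) hb
    · rintro rfl
      exact hβ i hi hr hb

lemma IsFan.exists_isProper_insert_of_not_reachable [DecidableEq V] (hc : IsProper G c)
    (hF : IsFan G c x y k) (hα : IsMissing G c x α) (hβ : IsMissing G c (y k) β)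
    (hk : ¬(kempeGraph G c α β).Reachable x (y k))
    (hfan : ∀ i < k, ¬(kempeGraph G c α β).Reachable x (y i) → c s(x, y (i + 1)) ≠ some β) :
    ∃ c' : Sym2 V → Option (Fin N), IsProper G c' ∧
      insert s(x, y 0) (coloredEdges c) ⊆ coloredEdges c' := by
  rw [← coloredEdges_kempeSwap (x := x) (α := α) (β := β)]
  refine (hF.kempeSwap hα hfan).exists_isProper_insert hc.kempeSwap ?_
    ((isMissing_kempeSwap_of_not_reachable hk).2 hβ)
  simpa [isMissing_kempeSwap_of_reachable .rfl] using hα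

lemma IsFan.exists_isProper_insert_of_eq_some [Fintype V] [DecidableEq V] (hc : IsProper G c)
    (hF : IsFan G c x y k) (hα : IsMissing G c x α) (hβ : IsMissing G c (y k) β) {t : ℕ}
    (htk : t < k) (ht : c s(x, y (t + 1)) = some β) :
    ∃ c' : Sym2 V → Option (Fin N), IsProper G c' ∧
      insert s(x, y 0) (coloredEdges c) ⊆ coloredEdges c' := by
  classical
  have hβt : IsMissing G c (y t) β := by
    obtain ⟨b, hb, hbt⟩ := hF.isMissing_succ t htk
    exact Option.some.inj (ht.symm.trans hb) ▸ hbt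
  have huniq : ∀ i < k, c s(x, y (i + 1)) = some β → i = t := fun i hi h =>
    Nat.succ_injective (hF.injOn (Set.mem_Iic.2 hi) (Set.mem_Iic.2 htk)
      (hc (hF.adj _ hi) (hF.adj _ htk) h ht))
  have hnot : ¬((kempeGraph G c α β).Reachable x (y t) ∧
      (kempeGraph G c α β).Reachable x (y k)) := fun ⟨hrt, hrk⟩ =>
    not_reachable_of_degree_le_one (fun _ => hc.degree_kempeGraph_le_two)
      (hF.adj t htk.le).ne (hF.adj k le_rfl).ne (fun h => htk.ne (hF.injOn
        (Set.mem_Iic.2 htk.le) (Set.mem_Iic.2 le_rfl) h))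
      (hc.degree_kempeGraph_le_one (.inl hα)) (hc.degree_kempeGraph_le_one (.inr hβt))
      (hc.degree_kempeGraph_le_one (.inr hβ)) hrt hrk
  by_cases hrt : (kempeGraph G c α β).Reachable x (y t)
  · exact hF.exists_isProper_insert_of_not_reachable hc hα hβ (fun h => hnot ⟨hrt, h⟩)
      fun i hi hri h => hri (huniq i hi h ▸ hrt)
  · exact (hF.mono htk.le).exists_isProper_insert_of_not_reachable hc hα hβt hrt
      fun i hi _ h => hi.ne (huniq i (hi.trans htk) h)

end Fan

section Vizing

variable [Fintype V] [DecidableEq V] [DecidableRel G.Adj]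

theorem IsProper.exists_isProper_insert (hd : ∀ v, G.degree v < N) (hc : IsProper G c)
    (hxw : G.Adj x w) :
    ∃ c' : Sym2 V → Option (Fin N), IsProper G c' ∧
      insert s(x, w) (coloredEdges c) ⊆ coloredEdges c' := by
  by_cases h0 : c s(x, w) ≠ none
  · exact ⟨c, hc, Set.insert_subset h0 subset_rfl⟩
  obtain ⟨y, k, rfl, hF, hmax⟩ := exists_maximal_isFan hxw (not_not.1 h0)
  obtain ⟨β, hβk⟩ := exists_isMissing (c := c) (hd (y k))
  by_cases hβx : IsMissing G c x β
  · exact hF.exists_isProper_insert hc hβx hβk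
  obtain ⟨α, hαx⟩ := exists_isMissing (c := c) (hd x)
  obtain ⟨z, hxz, hz⟩ : ∃ z, G.Adj x z ∧ c s(x, z) = some β := by simpa [IsMissing] using hβx
  obtain ⟨j, hj, rfl⟩ := hmax z β hxz hz hβk
  obtain ⟨t, rfl⟩ : ∃ t, j = t + 1 :=
    Nat.exists_eq_add_one.2 (Nat.pos_of_ne_zero fun h => by simp [h, hF.uncolored] at hz)
  exact hF.exists_isProper_insert_of_eq_some hc hαx hβk hj hz

theorem exists_isProper_edgeSet_subset (hd : ∀ v, G.degree v < N) :
    ∃ c : Sym2 V → Option (Fin N), IsProper G c ∧ G.edgeSet ⊆ coloredEdges c := by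
  refine Set.Finite.induction_on_subset (motive := fun s _ => ∃ c : Sym2 V → Option (Fin N),
    IsProper G c ∧ s ⊆ coloredEdges c) _ (Set.toFinite _) ⟨_, isProper_none, by simp⟩ ?_
  rintro e s he - - ⟨c, hc, hs⟩
  induction e using Sym2.ind with
  | _ x w =>
    obtain ⟨c', hc', hsub⟩ := hc.exists_isProper_insert hd he
    exact ⟨c', hc', (Set.insert_subset_insert hs).trans hsub⟩

theorem exists_properEdgeColoring_maxDegree_add_one :
    ∃ f, ProperEdgeColoring G (G.maxDegree + 1) f := by
  obtain ⟨c, hc, hG⟩ := exists_isProper_edgeSet_subset (N := G.maxDegree + 1) fun v =>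
    Nat.lt_succ_of_le (G.degree_le_maxDegree v)
  exact ⟨_, hc.properEdgeColoring_getD hG 0⟩

end Vizing

end Coloring

/-- Vizing's theorem together with the trivial lower bound:
`Δ(G) ≤ χ₁(G) ≤ Δ(G) + 1` for every finite simple graph `G`. -/
theorem vizing {V : Type*} [Fintype V] (G : SimpleGraph V)
    [DecidableRel G.Adj] :
    G.maxDegree ≤ chromIndex G ∧ chromIndex G ≤ G.maxDegree + 1 := by
  classical
  obtain ⟨f, hf⟩ := exists_properEdgeColoring_maxDegree_add_one (G := G)
  exact ⟨le_csInf ⟨_, f, hf⟩ fun _ ⟨_, hg⟩ => hg.maxDegree_le, Nat.sInf_le ⟨f, hf⟩⟩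

end Colorful
end

section
/- The colorful exchange graph G^c_n is a covering of the uncolored exchange graph G_n: the map sending a colored triangulation to its underlying (support) triangulation is a surjective graph homomorphism under which every vertex of G^c_n has its n incident edges mapped bijectively to the n incident edges of its image, and every fiber has exactly n! elements. -/
namespace Colorful

/-- `x` lies strictly inside the (counterclockwise) arc from `a` to `b` of a convex
`m`-gon whose vertices are labeled by `ZMod m` in cyclic order. -/
def StrictArc (m : ℕ) (a b x : ZMod m) : Prop :=
  0 < (x - a).val ∧ (x - a).val < (b - a).val

/-- `d` is a diagonal of the convex `m`-gon: an unordered pair of distinct,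
non-adjacent vertices. -/
def IsDiag (m : ℕ) (d : Finset (ZMod m)) : Prop :=
  ∃ a b : ZMod m, d = {a, b} ∧ a ≠ b ∧ a ≠ b + 1 ∧ b ≠ a + 1

/-- Two diagonals of the convex `m`-gon cross (in their interiors). -/
def Cross (m : ℕ) (d e : Finset (ZMod m)) : Prop :=
  ∃ a b c c' : ZMod m, d = {a, b} ∧ e = {c, c'} ∧
    StrictArc m a b c ∧ StrictArc m b a c'

/-- A triangulation of the convex `m`-gon: a maximal family of pairwise
noncrossing diagonals; equivalently it consists of exactly `m - 3` diagonals. -/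
def IsTriangulation (m : ℕ) (s : Finset (Finset (ZMod m))) : Prop :=
  (∀ d ∈ s, IsDiag m d) ∧ (∀ d ∈ s, ∀ e ∈ s, d ≠ e → ¬ Cross m d e) ∧
    s.card = m - 3

/-- A diagonal-colored triangulation of the convex `(n+3)`-gon: a set of
(diagonal, color) pairs whose diagonals form a triangulation, where the coloring
is a function on the diagonals (`(s.image Prod.fst).card = s.card`) that is
injective, hence bijective, onto the `n`-element color set `Fin n`
(`(s.image Prod.snd).card = s.card`). -/
def CTri (n : ℕ) (s : Finset (Finset (ZMod (n + 3)) × Fin n)) : Prop :=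
  IsTriangulation (n + 3) (s.image Prod.fst) ∧
  (s.image Prod.fst).card = s.card ∧ (s.image Prod.snd).card = s.card

/-- Adjacency in the colorful exchange graph: `t` is obtained from `s` by
flipping the single diagonal `d` of color `c` to the diagonal `e`, preserving
its color. -/
def CAdj (n : ℕ) (s t : Finset (Finset (ZMod (n + 3)) × Fin n)) : Prop :=
  CTri n s ∧ CTri n t ∧ ∃ d e c, d ≠ e ∧ (d, c) ∈ s ∧ (e, c) ∈ t ∧
    t = insert (e, c) (s.erase (d, c))

/-- The colorful exchange graph `G^c_n` on diagonal-colored triangulations. -/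
def cgraph (n : ℕ) : SimpleGraph {s // CTri n s} where
  Adj s t := s ≠ t ∧ (CAdj n s.val t.val ∨ CAdj n t.val s.val)
  symm := ⟨fun s t h => ⟨h.1.symm, h.2.symm⟩⟩
  loopless := ⟨fun s h => h.1 rfl⟩

/-- Adjacency in the (uncolored) exchange graph `G_n`: triangulations `s` and
`t` differ by the flip of a single diagonal. -/
def UAdj (n : ℕ) (s t : Finset (Finset (ZMod (n + 3)))) : Prop :=
  IsTriangulation (n + 3) s ∧ IsTriangulation (n + 3) t ∧ s ≠ t ∧
    ∃ d e, d ∈ s ∧ t = insert e (s.erase d)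

end Colorful

/-!
A diagonal-colored triangulation with support `t` is the graph of a bijection from the
diagonals of `t` to the `n` colors, so each fiber of the support map has `n!` elements (in
particular it is nonempty). A colored flip replaces `(d, c)` by `(e, c)`, so it is determined by
the flipped diagonal `d` and its replacement `e`, exactly like the uncolored flip of the support:
the color `c` is forced to be the color of `d`.
-/

open Finset

namespace Finset

variable {α β : Type*} [DecidableEq α]

theorem image_erase_of_injOn [DecidableEq β] {f : α → β} {s : Finset α} {a : α}
    (ha : a ∈ s) (hf : Set.InjOn f s) : (s.erase a).image f = (s.image f).erase (f a) := by
  ext y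
  simp only [mem_image, mem_erase]
  constructor
  · rintro ⟨x, ⟨hxa, hx⟩, rfl⟩
    exact ⟨fun h => hxa (hf hx ha h), x, hx, rfl⟩
  · rintro ⟨hy, x, hx, rfl⟩
    exact ⟨x, ⟨by rintro rfl; exact hy rfl, hx⟩, rfl⟩

theorem notMem_of_card_insert_erase {s : Finset α} {a b : α} (ha : a ∈ s) (hab : a ≠ b)
    (h : #(insert b (s.erase a)) = #s) : b ∉ s := by
  intro hb
  rw [insert_eq_of_mem (mem_erase.mpr ⟨hab.symm, hb⟩), card_erase_of_mem ha] at h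
  have := card_pos.mpr ⟨a, ha⟩
  omega

theorem eq_and_eq_of_insert_erase_eq {s : Finset α} {a a' b b' : α} (ha : a ∈ s) (hb : b ∉ s)
    (h : insert b (s.erase a) = insert b' (s.erase a')) : a = a' ∧ b = b' := by
  constructor
  · by_contra hne
    have : a ∈ insert b (s.erase a) := h ▸ mem_insert_of_mem (mem_erase.mpr ⟨hne, ha⟩)
    rcases mem_insert.mp this with rfl | h'
    · exact hb ha
    · exact (mem_erase.mp h').1 rfl
  · rcases mem_insert.mp (h ▸ mem_insert_self b (s.erase a)) with h' | h'
    · exact h'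
    · exact absurd (mem_of_mem_erase h') hb

section Flip

variable [DecidableEq β] {s : Finset (α × β)} {a : α} {c : β}

theorem image_fst_insert_erase (hs : Set.InjOn Prod.fst (s : Set (α × β))) (h : (a, c) ∈ s)
    (b : α) :
    (insert (b, c) (s.erase (a, c))).image Prod.fst = insert b ((s.image Prod.fst).erase a) := by
  rw [image_insert, image_erase_of_injOn h hs]

theorem image_snd_insert_erase (hs : Set.InjOn Prod.snd (s : Set (α × β))) (h : (a, c) ∈ s)
    (b : α) :
    (insert (b, c) (s.erase (a, c))).image Prod.snd = s.image Prod.snd := by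
  rw [image_insert, image_erase_of_injOn h hs]
  exact insert_erase (mem_image_of_mem Prod.snd h :)

theorem injOn_insert_erase (hfst : Set.InjOn Prod.fst (s : Set (α × β)))
    (hsnd : Set.InjOn Prod.snd (s : Set (α × β))) (h : (a, c) ∈ s) {b : α}
    (hb : b ∉ s.image Prod.fst) :
    Set.InjOn Prod.fst (↑(insert (b, c) (s.erase (a, c))) : Set (α × β)) ∧
      Set.InjOn Prod.snd (↑(insert (b, c) (s.erase (a, c))) : Set (α × β)) := by
  have hcard : #(insert (b, c) (s.erase (a, c))) = #s := by
    rw [card_insert_of_notMem fun hb' => hb (mem_image_of_mem _ (mem_of_mem_erase hb')),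
      card_erase_add_one h]
  have hb' : b ∉ (s.image Prod.fst).erase a := fun hb' => hb (mem_of_mem_erase hb')
  simp only [← card_image_iff]
  rw [image_fst_insert_erase hfst h, image_snd_insert_erase hsnd h, hcard,
    card_insert_of_notMem hb', card_erase_add_one (mem_image_of_mem _ h),
    card_image_of_injOn hfst, card_image_of_injOn hsnd]
  exact ⟨rfl, rfl⟩

end Flip

section Graph

variable [DecidableEq β]

def graphOn (t : Finset α) (f : t → β) : Finset (α × β) :=
  t.attach.image fun x => (x.1, f x)

variable {t : Finset α} {f : t → β}

theorem mem_graphOn {a : α} {b : β} :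
    (a, b) ∈ t.graphOn f ↔ ∃ h : a ∈ t, f ⟨a, h⟩ = b := by
  simp [graphOn]

theorem image_fst_graphOn : (t.graphOn f).image Prod.fst = t := by
  ext; simp [graphOn, image_image]

theorem card_graphOn : #(t.graphOn f) = #t := by
  rw [graphOn, card_image_of_injective _ fun x y h => Subtype.ext (congrArg Prod.fst h),
    card_attach]

theorem injOn_fst_graphOn : Set.InjOn Prod.fst (t.graphOn f : Set (α × β)) :=
  card_image_iff.mp (by rw [image_fst_graphOn, card_graphOn])

theorem injOn_snd_graphOn (hf : Function.Injective f) :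
    Set.InjOn Prod.snd (t.graphOn f : Set (α × β)) := by
  rintro ⟨a, b⟩ hab ⟨a', b'⟩ hab' (rfl : b = b')
  obtain ⟨ha, rfl⟩ := mem_graphOn.mp hab
  obtain ⟨ha', hb⟩ := mem_graphOn.mp hab'
  obtain rfl : a' = a := congrArg Subtype.val (hf hb)
  rfl

theorem graphOn_injective (t : Finset α) : Function.Injective (t.graphOn : (t → β) → _) := by
  intro f g h
  funext x
  have hx : (x.1, f x) ∈ t.graphOn g := h ▸ mem_graphOn.mpr ⟨x.2, rfl⟩
  exact (mem_graphOn.mp hx).2.symm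

theorem exists_equiv_graphOn_eq [Fintype β] {s : Finset (α × β)}
    (hfst : Set.InjOn Prod.fst (s : Set (α × β)))
    (hsnd : Set.InjOn Prod.snd (s : Set (α × β))) (hcard : #s = Fintype.card β) :
    ∃ e : s.image Prod.fst ≃ β, (s.image Prod.fst).graphOn e = s := by
  choose g hgs hg using fun x : s.image Prod.fst => mem_image.mp x.2
  have hg_inj : Function.Injective (fun x => (g x).2) := fun x y h =>
    Subtype.ext ((hg x).symm.trans ((congrArg Prod.fst (hsnd (hgs x) (hgs y) h)).trans (hg y)))
  have hg_bij : Function.Bijective (fun x => (g x).2) :=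
    (Fintype.bijective_iff_injective_and_card _).mpr
      ⟨hg_inj, by rw [Fintype.card_coe, card_image_of_injOn hfst, hcard]⟩
  refine ⟨Equiv.ofBijective _ hg_bij, ?_⟩
  ext ⟨a, b⟩
  rw [mem_graphOn]
  constructor
  · rintro ⟨ha, rfl⟩
    have hpair : g ⟨a, ha⟩ = (a, (g ⟨a, ha⟩).2) := Prod.ext (hg ⟨a, ha⟩) rfl
    exact hpair ▸ hgs ⟨a, ha⟩
  · intro h
    refine ⟨mem_image_of_mem _ h, ?_⟩
    have := hfst (hgs ⟨a, mem_image_of_mem _ h⟩) h (hg _)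
    simp [this]

theorem natCard_injOn_fst_snd_image_fst_eq [Fintype β] (ht : #t = Fintype.card β) :
    Nat.card {s : Finset (α × β) // Set.InjOn Prod.fst (s : Set (α × β)) ∧
      Set.InjOn Prod.snd (s : Set (α × β)) ∧ s.image Prod.fst = t} =
      (Fintype.card β).factorial := by
  have hbij : Function.Bijective fun e : t ≃ β =>
      (⟨t.graphOn e, injOn_fst_graphOn, injOn_snd_graphOn e.injective, image_fst_graphOn⟩ :
        {s : Finset (α × β) // Set.InjOn Prod.fst (s : Set (α × β)) ∧
          Set.InjOn Prod.snd (s : Set (α × β)) ∧ s.image Prod.fst = t}) := by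
    refine ⟨fun e e' h =>
      Equiv.coe_fn_injective (graphOn_injective t (congrArg Subtype.val h)), ?_⟩
    rintro ⟨s, hfst, hsnd, rfl⟩
    obtain ⟨e, he⟩ :=
      exists_equiv_graphOn_eq hfst hsnd (by rw [← card_image_of_injOn hfst, ht])
    exact ⟨e, Subtype.ext he⟩
  rw [← Nat.card_eq_of_bijective _ hbij, Nat.card_eq_fintype_card, ← ht, ← Fintype.card_coe t,
    Fintype.card_equiv (Fintype.equivOfCardEq (by rw [Fintype.card_coe, ht]))]

end Graph

end Finset

namespace Colorful

variable {n : ℕ} {s t : Finset (Finset (ZMod (n + 3)) × Fin n)}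

theorem card_eq_of_isTriangulation {t : Finset (Finset (ZMod (n + 3)))}
    (ht : IsTriangulation (n + 3) t) : #t = n := by
  have := ht.2.2
  omega

theorem ctri_iff : CTri n s ↔ IsTriangulation (n + 3) (s.image Prod.fst) ∧
    Set.InjOn Prod.fst (s : Set (Finset (ZMod (n + 3)) × Fin n)) ∧
      Set.InjOn Prod.snd (s : Set (Finset (ZMod (n + 3)) × Fin n)) := by
  rw [CTri, card_image_iff, card_image_iff]

theorem card_fiber_support {t : Finset (Finset (ZMod (n + 3)))}
    (ht : IsTriangulation (n + 3) t) :
    Nat.card {s : Finset (Finset (ZMod (n + 3)) × Fin n) //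
      CTri n s ∧ s.image Prod.fst = t} = n.factorial := by
  have hfiber : ∀ s : Finset (Finset (ZMod (n + 3)) × Fin n),
      CTri n s ∧ s.image Prod.fst = t ↔
        Set.InjOn Prod.fst (s : Set (Finset (ZMod (n + 3)) × Fin n)) ∧
          Set.InjOn Prod.snd (s : Set (Finset (ZMod (n + 3)) × Fin n)) ∧
          s.image Prod.fst = t := by
    intro s
    rw [ctri_iff]
    constructor
    · rintro ⟨⟨-, hfst, hsnd⟩, himg⟩
      exact ⟨hfst, hsnd, himg⟩
    · rintro ⟨hfst, hsnd, rfl⟩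
      exact ⟨⟨ht, hfst, hsnd⟩, rfl⟩
  rw [Nat.card_congr (Equiv.subtypeEquivRight hfiber),
    natCard_injOn_fst_snd_image_fst_eq (by rw [card_eq_of_isTriangulation ht, Fintype.card_fin]),
    Fintype.card_fin]

theorem CAdj.exists_flip (h : CAdj n s t) :
    ∃ d e c, (d, c) ∈ s ∧ d ≠ e ∧ e ∉ s.image Prod.fst ∧
      t = insert (e, c) (s.erase (d, c)) ∧
      t.image Prod.fst = insert e ((s.image Prod.fst).erase d) := by
  obtain ⟨hs, ht, d, e, c, hde, hds, -, rfl⟩ := h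
  have himg := image_fst_insert_erase (ctri_iff.mp hs).2.1 hds e
  refine ⟨d, e, c, hds, hde, notMem_of_card_insert_erase (mem_image_of_mem _ hds) hde ?_, rfl,
    himg⟩
  rw [← himg, card_eq_of_isTriangulation ht.1, card_eq_of_isTriangulation hs.1]

theorem CAdj.uadj (h : CAdj n s t) : UAdj n (s.image Prod.fst) (t.image Prod.fst) := by
  obtain ⟨d, e, c, hds, hde, -, -, himg⟩ := h.exists_flip
  have hd : d ∈ s.image Prod.fst := mem_image_of_mem _ hds
  refine ⟨h.1.1, h.2.1.1, fun heq => ?_, d, e, hd, himg⟩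
  have hd' : d ∈ insert e ((s.image Prod.fst).erase d) := himg ▸ heq ▸ hd
  simp [hde] at hd'

theorem injOn_image_fst_cadj (hs : CTri n s) :
    Set.InjOn (fun t => t.image Prod.fst) {t | CAdj n s t} := by
  intro t ht t' ht' himg
  obtain ⟨d, e, c, hds, -, he, rfl, himg₁⟩ := CAdj.exists_flip ht
  obtain ⟨d', e', c', hds', -, -, rfl, himg₂⟩ := CAdj.exists_flip ht'
  obtain ⟨rfl, rfl⟩ := eq_and_eq_of_insert_erase_eq (mem_image_of_mem _ hds) he
    (himg₁.symm.trans (himg.trans himg₂))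
  obtain rfl : c = c' := congrArg Prod.snd ((ctri_iff.mp hs).2.1 hds hds' rfl)
  rfl

theorem surjOn_image_fst_cadj (hs : CTri n s) :
    Set.SurjOn (fun t => t.image Prod.fst) {t | CAdj n s t}
      {u | UAdj n (s.image Prod.fst) u} := by
  rintro u ⟨-, hu, hne, d, e, hd, rfl⟩
  obtain ⟨⟨d, c⟩, hdc, rfl⟩ := mem_image.mp hd
  have hde : d ≠ e := by
    rintro rfl
    exact hne (insert_erase hd).symm
  have he : e ∉ s.image Prod.fst := notMem_of_card_insert_erase hd hde
    (by rw [card_eq_of_isTriangulation hu, card_eq_of_isTriangulation hs.1])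
  obtain ⟨-, hfst, hsnd⟩ := ctri_iff.mp hs
  have himg := image_fst_insert_erase hfst hdc e
  have hflip : CTri n (insert (e, c) (s.erase (d, c))) :=
    ctri_iff.mpr ⟨himg ▸ hu, injOn_insert_erase hfst hsnd hdc he⟩
  exact ⟨_, ⟨hs, hflip, d, e, c, hde, hdc, mem_insert_self _ _, rfl⟩, himg⟩

theorem exists_ctri_image_fst_eq {t : Finset (Finset (ZMod (n + 3)))}
    (ht : IsTriangulation (n + 3) t) : ∃ s, CTri n s ∧ s.image Prod.fst = t := by
  obtain ⟨⟨s, hs⟩⟩ := (Nat.card_pos_iff.mp (card_fiber_support ht ▸ n.factorial_pos)).1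
  exact ⟨s, hs⟩

/-- The support map (forgetting colors) exhibits `G^c_n` as a
covering of `G_n`: it is surjective onto the triangulations, maps edges to
edges, maps the `n` edges at each vertex bijectively onto the `n` edges at the
image vertex, and all its fibers have exactly `n!` elements. -/
theorem cgraph_covers_ugraph (n : ℕ) :
    (∀ t, IsTriangulation (n + 3) t →
      ∃ s, CTri n s ∧ s.image Prod.fst = t) ∧
    (∀ s t, CAdj n s t → UAdj n (s.image Prod.fst) (t.image Prod.fst)) ∧
    (∀ s, CTri n s →
      Set.BijOn (fun t : Finset (Finset (ZMod (n + 3)) × Fin n) =>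
          t.image Prod.fst)
        {t | CAdj n s t} {u | UAdj n (s.image Prod.fst) u}) ∧
    (∀ t, IsTriangulation (n + 3) t →
      Nat.card {s : Finset (Finset (ZMod (n + 3)) × Fin n) //
        CTri n s ∧ s.image Prod.fst = t} = n.factorial) :=
  ⟨fun _ ht => exists_ctri_image_fst_eq ht, fun _ _ h => h.uadj,
    fun _ hs => ⟨fun _ h => CAdj.uadj h, injOn_image_fst_cadj hs, surjOn_image_fst_cadj hs⟩,
    fun _ ht => card_fiber_support ht⟩

end Colorful
end

section
/- For n ≥ 2, if an automorphism γ of the associahedron A_n fixes the two facets F_j and F_{j+1} corresponding to adjacent vertices j, j+1 of the (n+3)-gon, then γ is the identity automorphism. -/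
/-!
An automorphism `γ` of the face poset permutes its atoms, the faces consisting of a single
diagonal, and two diagonals are compatible (non-crossing) exactly when their atoms lie below a
common face; so `γ` induces a permutation `σ` of the diagonals preserving compatibility.

A diagonal is compatible with the short diagonal at `i` iff it avoids the vertex `i`. Hence if
`σ` fixes every short diagonal it fixes every diagonal, and `γ` fixes every face, a face being
determined by the diagonals it contains.

Fixed short diagonals propagate around the polygon. If `σ` fixes the short diagonals at `i` and
`i + 1`, then `E := σ {i + 1, i + 3}` crosses `{i, i + 2}`, so `i + 1 ∈ E`. Since `σ` also
preserves the diagonals through `i`, the only diagonal through `i` crossing `E` is `{i, i + 2}`,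
as for `{i + 1, i + 3}`. Among the diagonals through `i + 1` this forces `E = {i + 1, i + 3}`,
because `{i, i + 3}` crosses every other one.
-/

namespace Colorful

/-- A (partial) dissection of the convex `m`-gon: a set of pairwise noncrossing
diagonals. The faces of the associahedron correspond to dissections, ordered by
reverse inclusion of the diagonal sets. -/
def Dissection (m : ℕ) (s : Finset (Finset (ZMod m))) : Prop :=
  (∀ d ∈ s, IsDiag m d) ∧ ∀ d ∈ s, ∀ e ∈ s, d ≠ e → ¬ Cross m d e

/-- A short diagonal: one whose endpoints are two steps apart on the boundary. -/
def IsShort (m : ℕ) (d : Finset (ZMod m)) : Prop :=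
  ∃ j : ZMod m, d = {j - 1, j + 1}

variable {m : ℕ}

-- The position of `x` counted counterclockwise from `j`. Reading all vertices off a common base
-- turns questions about cyclic order into linear arithmetic in `ℕ`, which `omega` decides.
def offset (j x : ZMod m) : ℕ := (x - j).val

lemma offset_lt [NeZero m] (j x : ZMod m) : offset j x < m := ZMod.val_lt _

lemma offset_inj [NeZero m] {j x y : ZMod m} : offset j x = offset j y ↔ x = y := by
  rw [offset, offset, ZMod.val_injective m |>.eq_iff, sub_left_inj]

@[simp]
lemma offset_self (j : ZMod m) : offset j j = 0 := by simp [offset]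

lemma offset_add_natCast (j : ZMod m) {k : ℕ} (hk : k < m) : offset j (j + k) = k := by
  rw [offset, add_sub_cancel_left, ZMod.val_cast_of_lt hk]

lemma offset_add_one (j : ZMod m) (hm : 1 < m) : offset j (j + 1) = 1 := by
  simpa using offset_add_natCast j hm

lemma offset_add_ofNat (j : ZMod m) (k : ℕ) [k.AtLeastTwo] (hk : k < m) :
    offset j (j + OfNat.ofNat k) = k :=
  offset_add_natCast j hk

lemma offset_sub_one (j : ZMod m) (hm : 1 < m) : offset j (j - 1) = m - 1 := by
  have := offset_add_natCast j (k := m - 1) (by omega)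
  rwa [Nat.cast_sub hm.le, ZMod.natCast_self, Nat.cast_one, zero_sub, ← sub_eq_add_neg] at this

lemma add_offset [NeZero m] (j x : ZMod m) : j + (offset j x : ZMod m) = x := by
  rw [offset, ZMod.natCast_zmod_val, add_sub_cancel]

lemma val_sub_add_offset [NeZero m] (j x y : ZMod m) :
    (x - y).val + offset j y = offset j x ∨ (x - y).val + offset j y = offset j x + m := by
  have hsum : offset j x = ((x - y).val + offset j y) % m := by
    rw [offset, offset, ← ZMod.val_add, sub_add_sub_cancel]
  have := ZMod.val_lt (x - y)
  have := offset_lt j y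
  rcases lt_or_ge ((x - y).val + offset j y) m with h | h
  · rw [Nat.mod_eq_of_lt h] at hsum
    omega
  · rw [Nat.mod_eq_sub_mod h, Nat.mod_eq_of_lt (by omega)] at hsum
    omega

lemma strictArc_iff_offset [NeZero m] (j a b x : ZMod m) :
    StrictArc m a b x ↔
      offset j a < offset j x ∧ offset j x < offset j b ∨
      offset j b < offset j a ∧ offset j a < offset j x ∨
      offset j x < offset j b ∧ offset j b < offset j a := by
  have := val_sub_add_offset j x a
  have := val_sub_add_offset j b a
  have := offset_lt j a
  have := offset_lt j b
  have := offset_lt j x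
  have := ZMod.val_lt (x - a)
  have := ZMod.val_lt (b - a)
  unfold StrictArc
  omega

lemma _root_.Finset.pair_eq_pair_iff {α : Type*} [DecidableEq α] {x y z w : α} :
    ({x, y} : Finset α) = {z, w} ↔ x = z ∧ y = w ∨ x = w ∧ y = z := by
  rw [← Finset.coe_inj, Finset.coe_pair, Finset.coe_pair, Set.pair_eq_pair_iff]

lemma cross_pair_iff {a b c d : ZMod m} :
    Cross m {a, b} {c, d} ↔
      StrictArc m a b c ∧ StrictArc m b a d ∨ StrictArc m a b d ∧ StrictArc m b a c := by
  constructor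
  · rintro ⟨a', b', c', d', h₁, h₂, hc, hd⟩
    rcases Finset.pair_eq_pair_iff.mp h₁ with ⟨rfl, rfl⟩ | ⟨rfl, rfl⟩ <;>
      rcases Finset.pair_eq_pair_iff.mp h₂ with ⟨rfl, rfl⟩ | ⟨rfl, rfl⟩ <;> tauto
  · rintro (⟨hc, hd⟩ | ⟨hd, hc⟩)
    · exact ⟨a, b, c, d, rfl, rfl, hc, hd⟩
    · exact ⟨a, b, d, c, rfl, Finset.pair_comm c d, hd, hc⟩

lemma not_cross_self (d : Finset (ZMod m)) : ¬ Cross m d d := by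
  rintro ⟨a, b, c, c', rfl, h, hc, -⟩
  have hc_mem : c ∈ ({a, b} : Finset (ZMod m)) := by rw [h]; simp
  simp only [Finset.mem_insert, Finset.mem_singleton] at hc_mem
  rcases hc_mem with rfl | rfl <;> simp [StrictArc] at hc

def Compatible (m : ℕ) (d e : Finset (ZMod m)) : Prop :=
  ¬ Cross m d e ∧ ¬ Cross m e d

def short (m : ℕ) (i : ZMod m) : Finset (ZMod m) := {i - 1, i + 1}

lemma short_add_one (i : ZMod m) : short m (i + 1) = {i, i + 2} := by
  rw [short, add_sub_cancel_right, add_assoc, one_add_one_eq_two]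

lemma short_add_two (i : ZMod m) : short m (i + 2) = {i + 1, i + 3} := by
  rw [short, show i + 2 - 1 = i + 1 by ring, show i + 2 + 1 = i + 3 by ring]

lemma isDiag_pair_add [NeZero m] (i : ZMod m) {k : ℕ} (hk : 2 ≤ k) (hkm : k + 2 ≤ m) :
    IsDiag m {i, i + k} := by
  refine ⟨i, i + k, rfl, fun h => ?_, fun h => ?_, fun h => ?_⟩ <;>
    have := congrArg (offset i) h
  · rw [offset_self, offset_add_natCast i (by omega)] at this
    omega
  · rw [offset_self, add_assoc, ← Nat.cast_add_one, offset_add_natCast i (by omega)] at this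
    omega
  · rw [offset_add_natCast i (by omega), offset_add_one i (by omega)] at this
    omega

lemma IsDiag.exists_eq_pair_add [NeZero m] {d : Finset (ZMod m)} {i : ZMod m}
    (hd : IsDiag m d) (hi : i ∈ d) : ∃ k : ℕ, 2 ≤ k ∧ k + 2 ≤ m ∧ d = {i, i + k} := by
  obtain ⟨x, rfl, hx, hx₁, hx₂⟩ :
      ∃ x, d = {i, x} ∧ x ≠ i ∧ x ≠ i + 1 ∧ i ≠ x + 1 := by
    obtain ⟨a, b, rfl, hab, hab₁, hba₁⟩ := hd
    simp only [Finset.mem_insert, Finset.mem_singleton] at hi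
    rcases hi with rfl | rfl
    · exact ⟨b, rfl, hab.symm, hba₁, hab₁⟩
    · exact ⟨a, Finset.pair_comm _ _, hab, hab₁, hba₁⟩
  have hne : ∀ y, x ≠ y → offset i x ≠ offset i y := fun y hxy h => hxy (offset_inj.mp h)
  have h₀ := hne i hx
  have h₁ := hne _ hx₁
  have h₂ := hne (i - 1) (by rintro rfl; exact hx₂ (sub_add_cancel i 1).symm)
  have := offset_lt i x
  rw [offset_self] at h₀
  rw [offset_add_one i (by omega)] at h₁
  rw [offset_sub_one i (by omega)] at h₂
  exact ⟨offset i x, by omega, by omega, by rw [add_offset]⟩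

lemma isDiag_short [NeZero m] (hm : 4 ≤ m) (i : ZMod m) : IsDiag m (short m i) := by
  have h := isDiag_pair_add (i - 1) (k := 2) le_rfl hm
  rwa [Nat.cast_ofNat, show i - 1 + 2 = i + 1 by ring] at h

lemma compatible_short_iff [NeZero m] (hm : 1 < m) (i : ZMod m) {d : Finset (ZMod m)}
    (hd : IsDiag m d) : Compatible m (short m i) d ↔ i ∉ d := by
  constructor
  · intro hc hi
    obtain ⟨k, hk, hkm, rfl⟩ := hd.exists_eq_pair_add hi
    apply hc.1
    rw [short, cross_pair_iff]
    simp only [strictArc_iff_offset i, offset_self, offset_add_one i hm, offset_sub_one i hm,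
      offset_add_natCast i (show k < m by omega)]
    omega
  · intro hi
    obtain ⟨a, b, rfl, -, -, -⟩ := hd
    simp only [Finset.mem_insert, Finset.mem_singleton, not_or] at hi
    have ha : offset i a ≠ 0 := fun h => hi.1 (offset_inj.mp (h.trans (offset_self i).symm)).symm
    have hb : offset i b ≠ 0 := fun h => hi.2 (offset_inj.mp (h.trans (offset_self i).symm)).symm
    have := offset_lt i a
    have := offset_lt i b
    constructor <;>
    · rw [short, cross_pair_iff]
      simp only [strictArc_iff_offset i, offset_add_one i hm, offset_sub_one i hm]
      omega

lemma eq_short_add_one_of_not_compatible [NeZero m] {i : ZMod m} {d : Finset (ZMod m)}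
    (hd : IsDiag m d) (hi : i ∈ d) (hc : ¬ Compatible m d (short m (i + 2))) :
    d = short m (i + 1) := by
  obtain ⟨k, hk, hkm, rfl⟩ := hd.exists_eq_pair_add hi
  obtain rfl : k = 2 := by
    by_contra hk₂
    apply hc
    constructor <;>
    · rw [short_add_two, cross_pair_iff]
      simp only [strictArc_iff_offset i, offset_self, offset_add_one i (by omega),
        offset_add_ofNat i 3 (by omega), offset_add_natCast i (show k < m by omega)]
      omega
  rw [short_add_one, Nat.cast_ofNat]

lemma eq_short_add_two_of_forall_not_compatible [NeZero m] (hm : 5 ≤ m) {i : ZMod m}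
    {e : Finset (ZMod m)} (he : IsDiag m e) (hi : i + 1 ∈ e)
    (h : ∀ d, IsDiag m d → i ∈ d → ¬ Compatible m d e → d = short m (i + 1)) :
    e = short m (i + 2) := by
  obtain ⟨k, hk, hkm, rfl⟩ := he.exists_eq_pair_add hi
  have hk₁ : i + 1 + k = i + (k + 1 : ℕ) := by push_cast; ring
  by_cases hk₂ : k = 2
  · rw [hk₂, short_add_two, Nat.cast_ofNat, add_assoc, show (1 : ZMod m) + 2 = 3 by norm_num]
  exfalso
  have hcross : Cross m {i, i + 3} {i + 1, i + 1 + k} := by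
    rw [hk₁, cross_pair_iff]
    simp only [strictArc_iff_offset i, offset_self, offset_add_one i (by omega),
      offset_add_ofNat i 3 (by omega), offset_add_natCast i (show k + 1 < m by omega)]
    omega
  have hdiag : IsDiag m {i, i + 3} := by
    simpa using isDiag_pair_add i (k := 3) (by norm_num) (by omega)
  have h₃ := h _ hdiag (by simp) (fun hc => hc.1 hcross)
  have h₃_mem : i + 3 ∈ short m (i + 1) := by rw [← h₃]; simp
  rw [short_add_one, Finset.mem_insert, Finset.mem_singleton] at h₃_mem
  rcases h₃_mem with h' | h' <;> have := congrArg (offset i) h' <;>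
    simp only [offset_self, offset_add_ofNat i 2 (by omega),
      offset_add_ofNat i 3 (by omega)] at this <;>
    omega

abbrev Diag (m : ℕ) := {d : Finset (ZMod m) // IsDiag m d}

section Perm

variable [NeZero m] (hm : 5 ≤ m)

def shortDiag (i : ZMod m) : Diag m := ⟨short m i, isDiag_short (by omega) i⟩

@[simp]
lemma coe_shortDiag (i : ZMod m) : (shortDiag hm i : Finset (ZMod m)) = short m i := rfl

lemma compatible_shortDiag_iff (i : ZMod m) (d : Diag m) :
    Compatible m (shortDiag hm i) d ↔ i ∉ d.1 :=
  compatible_short_iff (by omega) i d.2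

variable {σ : Equiv.Perm (Diag m)} (hσ : ∀ d e, Compatible m (σ d) (σ e) ↔ Compatible m d e)
include hσ

lemma perm_shortDiag_add_two {i : ZMod m} (h₀ : σ (shortDiag hm i) = shortDiag hm i)
    (h₁ : σ (shortDiag hm (i + 1)) = shortDiag hm (i + 1)) :
    σ (shortDiag hm (i + 2)) = shortDiag hm (i + 2) := by
  set E := σ (shortDiag hm (i + 2))
  have hE : i + 1 ∈ E.1 := by
    have hc : ¬ Compatible m (shortDiag hm (i + 1)) (shortDiag hm (i + 2)) := by
      rw [compatible_shortDiag_iff, not_not, coe_shortDiag, short_add_two]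
      simp
    rwa [← hσ, h₁, compatible_shortDiag_iff, not_not] at hc
  refine Subtype.ext (eq_short_add_two_of_forall_not_compatible hm E.2 hE fun d hd hid hdE => ?_)
  obtain ⟨d₀, hd₀⟩ := σ.surjective ⟨d, hd⟩
  have hid₀ : i ∈ d₀.1 := by
    have hc : ¬ Compatible m (σ (shortDiag hm i)) (σ d₀) := by
      rwa [h₀, hd₀, compatible_shortDiag_iff, not_not]
    rwa [hσ, compatible_shortDiag_iff, not_not] at hc
  have hc₀ : ¬ Compatible m d₀ (shortDiag hm (i + 2)) := by
    rwa [← hσ, hd₀]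
  have : d₀ = shortDiag hm (i + 1) :=
    Subtype.ext (eq_short_add_one_of_not_compatible d₀.2 hid₀ hc₀)
  rw [this, h₁] at hd₀
  exact congrArg Subtype.val hd₀.symm

lemma perm_shortDiag_eq {j : ZMod m} (h₀ : σ (shortDiag hm j) = shortDiag hm j)
    (h₁ : σ (shortDiag hm (j + 1)) = shortDiag hm (j + 1)) (i : ZMod m) :
    σ (shortDiag hm i) = shortDiag hm i := by
  have h : ∀ k : ℕ, σ (shortDiag hm (j + k)) = shortDiag hm (j + k) ∧
      σ (shortDiag hm (j + k + 1)) = shortDiag hm (j + k + 1) := by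
    intro k
    induction k with
    | zero => simpa using ⟨h₀, h₁⟩
    | succ k ih =>
      rw [Nat.cast_succ, ← add_assoc]
      refine ⟨ih.2, ?_⟩
      rw [add_assoc, one_add_one_eq_two]
      exact perm_shortDiag_add_two hm hσ ih.1 ih.2
  rw [← add_offset j i]
  exact (h _).1

theorem perm_eq_one_of_fixes_adjacent_shortDiag {j : ZMod m}
    (h₀ : σ (shortDiag hm j) = shortDiag hm j)
    (h₁ : σ (shortDiag hm (j + 1)) = shortDiag hm (j + 1)) : σ = 1 := by
  ext d x
  have h := hσ (shortDiag hm x) d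
  rw [perm_shortDiag_eq hm hσ h₀ h₁, compatible_shortDiag_iff, compatible_shortDiag_iff] at h
  exact not_iff_not.mp h

end Perm

abbrev Face (m : ℕ) := {s : Finset (Finset (ZMod m)) // Dissection m s}

instance : OrderBot (Face m) where
  bot := ⟨∅, by simp [Dissection]⟩
  bot_le a := Finset.empty_subset a.1

@[simp]
lemma Face.coe_bot : ((⊥ : Face m) : Finset (Finset (ZMod m))) = ∅ := rfl

def atom (d : Diag m) : Face m := ⟨{d.1}, by simp [Dissection, d.2]⟩

lemma atom_le_iff {d : Diag m} {a : Face m} : atom d ≤ a ↔ d.1 ∈ a.1 :=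
  Finset.singleton_subset_iff

lemma atom_injective : Function.Injective (atom (m := m)) := fun _ _ h =>
  Subtype.ext (Finset.singleton_injective (congrArg Subtype.val h))

lemma Face.ext_of_atom_le_iff {a b : Face m} (h : ∀ d, atom d ≤ a ↔ atom d ≤ b) :
    a = b := by
  ext x
  by_cases hx : IsDiag m x
  · simpa only [atom_le_iff] using h ⟨x, hx⟩
  · exact iff_of_false (fun h' => hx (a.2.1 x h')) (fun h' => hx (b.2.1 x h'))

lemma isAtom_atom (d : Diag m) : IsAtom (atom d) := by
  refine ⟨fun h => ?_, fun b hb => ?_⟩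
  · simpa [atom] using congrArg Subtype.val h
  · exact Subtype.ext (Finset.ssubset_singleton_iff.mp hb)

lemma isAtom_iff_exists_atom_eq {a : Face m} : IsAtom a ↔ ∃ d, atom d = a := by
  refine ⟨fun ha => ?_, fun ⟨d, hd⟩ => hd ▸ isAtom_atom d⟩
  obtain ⟨d, hd⟩ : a.1.Nonempty := by
    rw [Finset.nonempty_iff_ne_empty]
    exact fun h => ha.1 (Subtype.ext h)
  exact ⟨⟨d, a.2.1 d hd⟩,
    (ha.le_iff.mp (atom_le_iff.mpr hd)).resolve_left (isAtom_atom _).1⟩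

lemma compatible_iff_exists_face (d e : Diag m) :
    Compatible m d e ↔ ∃ a : Face m, atom d ≤ a ∧ atom e ≤ a := by
  simp only [atom_le_iff]
  constructor
  · intro h
    refine ⟨⟨{d.1, e.1}, ?_, ?_⟩, by simp, by simp⟩
    · simp [d.2, e.2]
    · simp only [Finset.mem_insert, Finset.mem_singleton]
      rintro x (rfl | rfl) y (rfl | rfl) hxy
      exacts [absurd rfl hxy, h.1, h.2, absurd rfl hxy]
  · rintro ⟨a, hd, he⟩
    by_cases hde : d.1 = e.1
    · rw [hde]
      exact ⟨not_cross_self _, not_cross_self _⟩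
    · exact ⟨a.2.2 _ hd _ he hde, a.2.2 _ he _ hd (Ne.symm hde)⟩

noncomputable def atomEquiv : Diag m ≃ {a : Face m // IsAtom a} :=
  Equiv.ofBijective (fun d => ⟨atom d, isAtom_atom d⟩)
    ⟨fun _ _ h => atom_injective (congrArg Subtype.val h),
      fun a => (isAtom_iff_exists_atom_eq.mp a.2).imp fun _ h => Subtype.ext h⟩

noncomputable def atomPerm (γ : Face m ≃o Face m) : Equiv.Perm (Diag m) :=
  (atomEquiv.trans (γ.toEquiv.subtypeEquiv fun a => (γ.isAtom_iff a).symm)).trans atomEquiv.symm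

lemma atom_atomPerm (γ : Face m ≃o Face m) (d : Diag m) : atom (atomPerm γ d) = γ (atom d) :=
  congrArg Subtype.val (atomEquiv.apply_symm_apply _)

lemma compatible_atomPerm_iff (γ : Face m ≃o Face m) (d e : Diag m) :
    Compatible m (atomPerm γ d) (atomPerm γ e) ↔ Compatible m d e := by
  rw [compatible_iff_exists_face, compatible_iff_exists_face, atom_atomPerm, atom_atomPerm,
    γ.surjective.exists]
  simp only [γ.le_iff_le]

lemma eq_self_of_atomPerm_eq_one {γ : Face m ≃o Face m} (h : atomPerm γ = 1) (a : Face m) :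
    γ a = a := by
  refine Face.ext_of_atom_le_iff fun d => ?_
  have h' := γ.le_iff_le (x := atom d) (y := a)
  rwa [← atom_atomPerm, h, Equiv.Perm.one_apply] at h'

/-- For `n ≥ 2`, an automorphism of the associahedron `A_n`
(an order-preserving bijection of its face poset of dissections) that fixes the
two facets `F_j`, `F_{j+1}` given by the short diagonals `{j-1, j+1}` and
`{j, j+2}` at adjacent vertices `j`, `j+1` of the `(n+3)`-gon is the identity. -/
theorem aut_fixing_two_adjacent_facets (n : ℕ) (hn : 2 ≤ n)
    (γ : {s : Finset (Finset (ZMod (n + 3))) // Dissection (n + 3) s} ≃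
      {s : Finset (Finset (ZMod (n + 3))) // Dissection (n + 3) s})
    (hγ : ∀ a b, a.val ⊆ b.val ↔ (γ a).val ⊆ (γ b).val)
    (j : ZMod (n + 3))
    (h1 : ∀ a, a.val = {({j - 1, j + 1} : Finset (ZMod (n + 3)))} → γ a = a)
    (h2 : ∀ a, a.val = {({j, j + 2} : Finset (ZMod (n + 3)))} → γ a = a) :
    ∀ a, γ a = a := by
  have hm : 5 ≤ n + 3 := by omega
  let γo : Face (n + 3) ≃o Face (n + 3) := ⟨γ, fun {a b} => (hγ a b).symm⟩
  have hfix : ∀ i, γ (atom (shortDiag hm i)) = atom (shortDiag hm i) →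
      atomPerm γo (shortDiag hm i) = shortDiag hm i := fun i h =>
    atom_injective ((atom_atomPerm γo _).trans h)
  have hσ : atomPerm γo = 1 :=
    perm_eq_one_of_fixes_adjacent_shortDiag hm (compatible_atomPerm_iff γo)
      (hfix j (h1 _ rfl)) (hfix (j + 1) (h2 _ (congrArg singleton (short_add_one j))))
  exact eq_self_of_atomPerm_eq_one hσ

end Colorful
end

section
/- In the colorful associahedron A^c_n, the subgroups S_n (recoloring) and D_{n+3} (polygon symmetries) of the automorphism group centralize each other and intersect trivially, so together they generate a subgroup isomorphic to S_n × D_{n+3}. -/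
/-!
Recoloring and polygon symmetries act on different coordinates of the (diagonal, color) pairs,
so they combine into one action of `S_n × D_{n+3}` on colored triangulations; commutation,
trivial intersection and the product structure of the generated subgroup all follow once this
action is faithful. Faithfulness is tested on fan triangulations: for `n ≥ 2` the apex of a fan
is the only vertex shared by its first two diagonals, so a symmetry preserving every fan (as a
set of diagonals) fixes every vertex and is trivial, and a recoloring fixing a fan is trivial
because the coloring is a function of the diagonals.
-/

namespace Colorful

/-- The action of a permutation `σ` of the `n` colors on a colored
triangulation: each diagonal of color `c` is recolored with `σ c`. -/
def recolor (n : ℕ) (σ : Equiv.Perm (Fin n))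
    (s : Finset (Finset (ZMod (n + 3)) × Fin n)) :
    Finset (Finset (ZMod (n + 3)) × Fin n) :=
  s.image fun p => (p.1, σ p.2)

/-- A symmetry of the convex `m`-gon acting on vertex labels: a rotation
`x ↦ x + a` or a reflection `x ↦ a - x`. -/
def IsPolySym (m : ℕ) (π : ZMod m → ZMod m) : Prop :=
  ∃ a : ZMod m, (∀ x, π x = x + a) ∨ (∀ x, π x = a - x)

end Colorful

section SubtypePerm

variable {G α : Type*} [Group G]

def MonoidHom.subtypePerm (f : G →* Equiv.Perm α) {p : α → Prop}
    (hp : ∀ g x, p x → p (f g x)) : G →* Equiv.Perm {x // p x} where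
  toFun g := (f g).subtypePerm fun x => ⟨fun h => by simpa using hp g⁻¹ _ h, hp g x⟩
  map_one' := by ext; simp
  map_mul' g h := by ext x; exact congrArg (· x.1) (map_mul f g h)

@[simp]
lemma MonoidHom.subtypePerm_apply (f : G →* Equiv.Perm α) {p : α → Prop}
    (hp : ∀ g x, p x → p (f g x)) (g : G) (x : {x // p x}) :
    (f.subtypePerm hp g x : α) = f g x :=
  rfl

end SubtypePerm

section ProdRange

variable {G H K : Type*} [Group G] [Group H] [Group K]

lemma MonoidHom.range_comp_inl_sup_range_comp_inr (f : G × H →* K) :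
    (f.comp (inl G H)).range ⊔ (f.comp (inr G H)).range = f.range := by
  refine le_antisymm (sup_le ?_ ?_) ?_
  · rintro _ ⟨a, rfl⟩; exact ⟨_, rfl⟩
  · rintro _ ⟨b, rfl⟩; exact ⟨_, rfl⟩
  · rintro _ ⟨p, rfl⟩
    rw [← Prod.fst_mul_snd p, map_mul]
    exact mul_mem (Subgroup.mem_sup_left ⟨p.1, rfl⟩) (Subgroup.mem_sup_right ⟨p.2, rfl⟩)

lemma MonoidHom.range_comp_inl_inf_range_comp_inr {f : G × H →* K}
    (hf : Function.Injective f) :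
    (f.comp (inl G H)).range ⊓ (f.comp (inr G H)).range = ⊥ := by
  refine eq_bot_iff.2 fun x ⟨⟨a, ha⟩, ⟨b, hb⟩⟩ => ?_
  have hab : ((a, 1) : G × H) = (1, b) := hf (ha.trans hb.symm)
  rw [Subgroup.mem_bot, ← ha, comp_apply, inl_apply, (Prod.mk.inj hab).1, Prod.mk_one_one,
    map_one]

end ProdRange

lemma apply_eq_of_forall_mem_of_image_eq {α : Type*} [DecidableEq α] {π : α → α}
    {D : Finset (Finset α)} (hD : D.image (Finset.image π) = D) {v : α} (hv : ∀ d ∈ D, v ∈ d)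
    {d₁ d₂ : Finset α} (h₁ : d₁ ∈ D) (h₂ : d₂ ∈ D) (h : ∀ w ∈ d₁, w ∈ d₂ → w = v) :
    π v = v := by
  have hπv (d) (hd : d ∈ D) : π v ∈ d := by
    rw [← hD] at hd
    obtain ⟨d', hd', rfl⟩ := Finset.mem_image.1 hd
    exact Finset.mem_image_of_mem π (hv d' hd')
  exact h _ (hπv _ h₁) (hπv _ h₂)

lemma ZMod.natCast_eq_natCast_iff_of_lt {m a b : ℕ} (ha : a < m) (hb : b < m) :
    (a : ZMod m) = b ↔ a = b := by
  rw [ZMod.natCast_eq_natCast_iff', Nat.mod_eq_of_lt ha, Nat.mod_eq_of_lt hb]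

lemma ZMod.natCast_ne_zero_of_pos_of_lt {m k : ℕ} (hk₀ : 0 < k) (hk : k < m) :
    (k : ZMod m) ≠ 0 := fun h =>
  absurd (Nat.le_of_dvd hk₀ ((ZMod.natCast_eq_zero_iff k m).1 h)) (by omega)

namespace Colorful

variable {m : ℕ}

lemma StrictArc.add_right {a b x : ZMod m} (h : StrictArc m a b x) (t : ZMod m) :
    StrictArc m (a + t) (b + t) (x + t) := by
  simpa only [StrictArc, add_sub_add_right_eq_sub] using h

lemma StrictArc.sub_left [NeZero m] {a b x : ZMod m} (h : StrictArc m a b x) (t : ZMod m) :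
    StrictArc m (t - b) (t - a) (t - x) := by
  obtain ⟨h₀, h₁⟩ := h
  have hbx : b - x = (b - a) - (x - a) := by ring
  simp only [StrictArc, sub_sub_sub_cancel_left, hbx, ZMod.val_sub h₁.le]
  omega

lemma Cross.disjoint {d e : Finset (ZMod m)} (h : Cross m d e) : Disjoint d e := by
  obtain ⟨a, b, c, c', rfl, rfl, ⟨hc₀, hc₁⟩, ⟨hc'₀, hc'₁⟩⟩ := h
  have hca : c ≠ a := fun h => by simp [h] at hc₀
  have hcb : c ≠ b := fun h => by simp [h] at hc₁
  have hc'b : c' ≠ b := fun h => by simp [h] at hc'₀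
  have hc'a : c' ≠ a := fun h => by simp [h] at hc'₁
  simp only [Finset.disjoint_insert_left, Finset.disjoint_singleton_left, Finset.mem_insert,
    Finset.mem_singleton]
  tauto

lemma IsPolySym.isDiag_image {π : ZMod m → ZMod m} (hπ : IsPolySym m π) {d : Finset (ZMod m)}
    (hd : IsDiag m d) : IsDiag m (d.image π) := by
  obtain ⟨a, b, rfl, hab, hab₁, hba₁⟩ := hd
  obtain ⟨t, hπ | hπ⟩ := hπ <;>
    simp only [Finset.image_insert, Finset.image_singleton, hπ]
  · refine ⟨a + t, b + t, rfl, ?_, ?_, ?_⟩ <;> intro h <;>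
      [exact hab (by simpa using h); exact hab₁ (by linear_combination h);
        exact hba₁ (by linear_combination h)]
  · refine ⟨t - a, t - b, rfl, ?_, ?_, ?_⟩ <;> intro h <;>
      [exact hab (by linear_combination -h); exact hba₁ (by linear_combination h);
        exact hab₁ (by linear_combination h)]

lemma IsPolySym.cross_image [NeZero m] {π : ZMod m → ZMod m} (hπ : IsPolySym m π)
    {d e : Finset (ZMod m)} (h : Cross m d e) : Cross m (d.image π) (e.image π) := by
  obtain ⟨a, b, c, c', rfl, rfl, hc, hc'⟩ := h
  obtain ⟨t, hπ | hπ⟩ := hπ <;>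
    simp only [Finset.image_insert, Finset.image_singleton, hπ]
  · exact ⟨a + t, b + t, c + t, c' + t, rfl, rfl, hc.add_right t, hc'.add_right t⟩
  · exact ⟨t - b, t - a, t - c, t - c', Finset.pair_comm _ _, rfl, hc.sub_left t,
      hc'.sub_left t⟩

def dihedralPerm (m : ℕ) : DihedralGroup m →* Equiv.Perm (ZMod m) where
  toFun
    | .r i => Equiv.subRight i
    | .sr i => Equiv.subLeft i
  map_one' := Equiv.ext sub_zero
  map_mul' := by
    rintro (i | i) (j | j) <;> ext x <;> simp <;> ring

@[simp]
lemma dihedralPerm_r (i x : ZMod m) : dihedralPerm m (.r i) x = x - i := rfl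

@[simp]
lemma dihedralPerm_sr (i x : ZMod m) : dihedralPerm m (.sr i) x = i - x := rfl

lemma isPolySym_dihedralPerm (g : DihedralGroup m) : IsPolySym m (dihedralPerm m g) := by
  cases g with
  | r i => exact ⟨-i, Or.inl fun x => by simp [sub_eq_add_neg]⟩
  | sr i => exact ⟨i, Or.inr fun x => by simp⟩

lemma dihedralPerm_injective (hm : 3 ≤ m) : Function.Injective (dihedralPerm m) := by
  rw [injective_iff_map_eq_one]
  intro g hg
  have hfix x : dihedralPerm m g x = x := by rw [hg]; rfl
  cases g with
  | r i =>
    have h0 := hfix 0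
    rw [dihedralPerm_r, zero_sub, neg_eq_zero] at h0
    rw [h0, DihedralGroup.r_zero]
  | sr i =>
    have h0 := hfix 0
    have h1 := hfix 1
    simp only [dihedralPerm_sr, sub_zero] at h0 h1
    exact (ZMod.natCast_ne_zero_of_pos_of_lt (m := m) (k := 2) (by omega) (by omega)
      (by push_cast; linear_combination h0 - h1)).elim

lemma IsTriangulation.image_dihedralPerm [NeZero m] {s : Finset (Finset (ZMod m))}
    (hs : IsTriangulation m s) (g : DihedralGroup m) :
    IsTriangulation m (s.image (Finset.image (dihedralPerm m g))) := by
  obtain ⟨hdiag, hnc, hcard⟩ := hs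
  have himage_inv (d : Finset (ZMod m)) :
      (d.image (dihedralPerm m g)).image (dihedralPerm m g⁻¹) = d := by
    simp [Finset.image_image]
  refine ⟨?_, ?_, ?_⟩
  · simp only [Finset.mem_image]
    rintro _ ⟨d, hd, rfl⟩
    exact (isPolySym_dihedralPerm g).isDiag_image (hdiag d hd)
  · simp only [Finset.mem_image]
    rintro _ ⟨d, hd, rfl⟩ _ ⟨e, he, rfl⟩ hde hcross
    have := (isPolySym_dihedralPerm g⁻¹).cross_image hcross
    rw [himage_inv, himage_inv] at this
    exact hnc d hd e he (by rintro rfl; exact hde rfl) this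
  · rwa [Finset.card_image_of_injective _ (Finset.image_injective (dihedralPerm m g).injective)]

def colorPerm (n : ℕ) (x : Equiv.Perm (Fin n) × DihedralGroup (n + 3)) :
    Equiv.Perm (Finset (Finset (ZMod (n + 3)) × Fin n)) :=
  ((dihedralPerm _ x.2).finsetCongr.prodCongr x.1).finsetCongr

variable {n : ℕ}

lemma colorPerm_apply (x : Equiv.Perm (Fin n) × DihedralGroup (n + 3))
    (s : Finset (Finset (ZMod (n + 3)) × Fin n)) :
    colorPerm n x s = s.image fun p => (p.1.image (dihedralPerm _ x.2), x.1 p.2) := by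
  simp only [colorPerm, Equiv.finsetCongr_apply, Finset.map_eq_image]
  exact Finset.image_congr fun p _ => by simp [Prod.map, Finset.map_eq_image]

variable (n) in
def colorAct :
    Equiv.Perm (Fin n) × DihedralGroup (n + 3) →*
      Equiv.Perm (Finset (Finset (ZMod (n + 3)) × Fin n)) :=
  MonoidHom.mk' (colorPerm n) fun x y => by
    ext1 s
    simp only [Equiv.Perm.mul_apply, colorPerm_apply, Finset.image_image, Function.comp_def,
      Prod.fst_mul, Prod.snd_mul, map_mul, Equiv.Perm.coe_mul]

lemma colorAct_apply (x : Equiv.Perm (Fin n) × DihedralGroup (n + 3))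
    (s : Finset (Finset (ZMod (n + 3)) × Fin n)) :
    colorAct n x s = s.image fun p => (p.1.image (dihedralPerm _ x.2), x.1 p.2) :=
  colorPerm_apply x s

lemma image_fst_colorAct (x : Equiv.Perm (Fin n) × DihedralGroup (n + 3))
    (s : Finset (Finset (ZMod (n + 3)) × Fin n)) :
    (colorAct n x s).image Prod.fst =
      (s.image Prod.fst).image (Finset.image (dihedralPerm _ x.2)) := by
  simp [colorAct_apply, Finset.image_image, Function.comp_def]

lemma ctri_colorAct {s : Finset (Finset (ZMod (n + 3)) × Fin n)} (hs : CTri n s)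
    (x : Equiv.Perm (Fin n) × DihedralGroup (n + 3)) : CTri n (colorAct n x s) := by
  obtain ⟨htri, hfst, hsnd⟩ := hs
  have hcard : (colorAct n x s).card = s.card := by
    simp [colorAct, colorPerm]
  have himage_snd : (colorAct n x s).image Prod.snd = (s.image Prod.snd).image x.1 := by
    simp [colorAct_apply, Finset.image_image, Function.comp_def]
  refine ⟨image_fst_colorAct x s ▸ htri.image_dihedralPerm x.2, ?_, ?_⟩
  · rw [image_fst_colorAct, Finset.card_image_of_injective _
      (Finset.image_injective (dihedralPerm _ x.2).injective), hcard, hfst]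
  · rw [himage_snd, Finset.card_image_of_injective _ x.1.injective, hcard, hsnd]

variable (n) in
def ctriAct : Equiv.Perm (Fin n) × DihedralGroup (n + 3) →* Equiv.Perm {s // CTri n s} :=
  (colorAct n).subtypePerm fun x _ hs => ctri_colorAct hs x

lemma CTri.color_eq {s : Finset (Finset (ZMod (n + 3)) × Fin n)} (hs : CTri n s)
    {d : Finset (ZMod (n + 3))} {c c' : Fin n} (h : (d, c) ∈ s) (h' : (d, c') ∈ s) : c = c' :=
  congrArg Prod.snd (Finset.card_image_iff.1 hs.2.1 h h' rfl)

def fanDiag (v : ZMod (n + 3)) (i : Fin n) : Finset (ZMod (n + 3)) :=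
  {v, v + ((i + 2 : ℕ) : ZMod (n + 3))}

def fan (v : ZMod (n + 3)) : Finset (Finset (ZMod (n + 3)) × Fin n) :=
  Finset.univ.image fun i => (fanDiag v i, i)

lemma add_natCast_add_two_injective (v : ZMod (n + 3)) :
    Function.Injective fun i : Fin n => v + ((i + 2 : ℕ) : ZMod (n + 3)) := fun i j h =>
  Fin.ext <| by
    have := (ZMod.natCast_eq_natCast_iff_of_lt (m := n + 3) (a := i + 2) (b := j + 2)
      (by omega) (by omega)).1 (add_left_cancel h)
    omega

lemma fanDiag_injective (v : ZMod (n + 3)) : Function.Injective (fanDiag v) := by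
  intro i j h
  have hmem : v + ((i + 2 : ℕ) : ZMod (n + 3)) ∈ fanDiag v j := h ▸ by simp [fanDiag]
  rcases Finset.mem_insert.1 hmem with hv | hij
  · exact absurd (by push_cast at hv ⊢; linear_combination hv)
      (ZMod.natCast_ne_zero_of_pos_of_lt (m := n + 3) (k := i + 2) (by omega) (by omega))
  · exact add_natCast_add_two_injective v (Finset.mem_singleton.1 hij)

lemma isDiag_fanDiag (v : ZMod (n + 3)) (i : Fin n) : IsDiag (n + 3) (fanDiag v i) := by
  refine ⟨v, _, rfl, fun h => ?_, fun h => ?_, fun h => ?_⟩ <;> push_cast at h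
  · exact ZMod.natCast_ne_zero_of_pos_of_lt (m := n + 3) (k := i + 2) (by omega) (by omega)
      (by push_cast; linear_combination -h)
  · exact ZMod.natCast_ne_zero_of_pos_of_lt (m := n + 3) (k := i + 3) (by omega) (by omega)
      (by push_cast; linear_combination -h)
  · exact ZMod.natCast_ne_zero_of_pos_of_lt (m := n + 3) (k := i + 1) (by omega) (by omega)
      (by push_cast; linear_combination h)

lemma mem_fan (v : ZMod (n + 3)) (i : Fin n) : (fanDiag v i, i) ∈ fan v :=
  Finset.mem_image_of_mem _ (Finset.mem_univ i)

lemma image_fst_fan (v : ZMod (n + 3)) :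
    (fan v).image Prod.fst = Finset.univ.image (fanDiag v) := by
  simp [fan, Finset.image_image, Function.comp_def]

lemma ctri_fan (v : ZMod (n + 3)) : CTri n (fan v) := by
  have hcard : (fan v).card = n := by
    rw [fan, Finset.card_image_of_injective _ fun i j h => congrArg Prod.snd h,
      Finset.card_univ, Fintype.card_fin]
  have hcard_fst : ((fan v).image Prod.fst).card = n := by
    rw [image_fst_fan, Finset.card_image_of_injective _ (fanDiag_injective v),
      Finset.card_univ, Fintype.card_fin]
  have himage_snd : (fan v).image Prod.snd = Finset.univ := by
    simp [fan, Finset.image_image, Function.comp_def]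
  refine ⟨⟨?_, ?_, by rw [hcard_fst]; omega⟩, by rw [hcard_fst, hcard], by
    rw [himage_snd, hcard, Finset.card_univ, Fintype.card_fin]⟩
  · simp only [image_fst_fan, Finset.mem_image, Finset.mem_univ, true_and]
    rintro _ ⟨i, rfl⟩
    exact isDiag_fanDiag v i
  · simp only [image_fst_fan, Finset.mem_image, Finset.mem_univ, true_and]
    rintro _ ⟨i, rfl⟩ _ ⟨j, rfl⟩ - hcross
    exact Finset.disjoint_left.1 hcross.disjoint (Finset.mem_insert_self v _)
      (Finset.mem_insert_self v _)

lemma apply_apex_eq_of_image_fan_eq (hn : 2 ≤ n) {π : ZMod (n + 3) → ZMod (n + 3)}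
    {v : ZMod (n + 3)}
    (h : ((fan v).image Prod.fst).image (Finset.image π) = (fan v).image Prod.fst) :
    π v = v := by
  refine apply_eq_of_forall_mem_of_image_eq h ?_
    (Finset.mem_image_of_mem _ (mem_fan v ⟨0, by omega⟩))
    (Finset.mem_image_of_mem _ (mem_fan v ⟨1, by omega⟩)) fun w hw₀ hw₁ => ?_
  · simp [image_fst_fan, fanDiag]
  · simp only [fanDiag, Finset.mem_insert, Finset.mem_singleton] at hw₀ hw₁
    rcases hw₀ with rfl | rfl
    · rfl
    · rcases hw₁ with h | h
      · exact h
      · exact absurd (add_natCast_add_two_injective (n := n) v (a₁ := ⟨0, by omega⟩)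
          (a₂ := ⟨1, by omega⟩) h) (by simp)

theorem ctriAct_injective (hn : 2 ≤ n) : Function.Injective (ctriAct n) := by
  rw [injective_iff_map_eq_one]
  rintro ⟨σ, g⟩ h
  have hfix (s) (hs : CTri n s) : colorAct n (σ, g) s = s :=
    congrArg Subtype.val (Equiv.ext_iff.1 h ⟨s, hs⟩)
  obtain rfl : g = 1 := by
    refine dihedralPerm_injective (m := n + 3) (by omega) ?_
    ext v
    rw [map_one, Equiv.Perm.one_apply]
    refine apply_apex_eq_of_image_fan_eq hn ?_
    rw [← image_fst_colorAct (σ, g), hfix _ (ctri_fan v)]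
  have hrecolor (c : Fin n) : (fanDiag 0 c, σ c) ∈ fan 0 := by
    rw [← hfix _ (ctri_fan 0), colorAct_apply]
    exact Finset.mem_image.2 ⟨_, mem_fan 0 c, by simp⟩
  obtain rfl : σ = 1 := Equiv.ext fun c => (ctri_fan 0).color_eq (hrecolor c) (mem_fan 0 c)
  rfl

/-- In the automorphism group of the colorful associahedron
(permutations of the vertices of `G^c_n`), the recoloring copy of `S_n` and the
copy of `D_{n+3}` coming from the polygon symmetries (acting on labels, keeping
colors) centralize each other and intersect trivially, so together they
generate a subgroup isomorphic to `S_n × D_{n+3}`. -/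
theorem sn_and_dihedral_commute (n : ℕ) (hn : 2 ≤ n) :
    ∃ (Φ : Equiv.Perm (Fin n) →* Equiv.Perm {s // CTri n s})
      (Ψ : DihedralGroup (n + 3) →* Equiv.Perm {s // CTri n s}),
      Function.Injective Φ ∧ Function.Injective Ψ ∧
      (∀ σ s, ((Φ σ) s).val = recolor n σ s.val) ∧
      (∀ g, ∃ π : ZMod (n + 3) → ZMod (n + 3), IsPolySym (n + 3) π ∧
        ∀ s, ((Ψ g) s).val = s.val.image fun p => (p.1.image π, p.2)) ∧
      (∀ σ g, Commute (Φ σ) (Ψ g)) ∧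
      Φ.range ⊓ Ψ.range = ⊥ ∧
      Nonempty ((↥(Φ.range ⊔ Ψ.range)) ≃*
        Equiv.Perm (Fin n) × DihedralGroup (n + 3)) := by
  have hinj := ctriAct_injective hn
  refine ⟨(ctriAct n).comp (.inl _ _), (ctriAct n).comp (.inr _ _),
    hinj.comp (Prod.mk_left_injective 1), hinj.comp (Prod.mk_right_injective 1),
    fun σ s => by simp [ctriAct, colorAct_apply, recolor],
    fun g => ⟨dihedralPerm _ g, isPolySym_dihedralPerm g,
      fun s => by simp [ctriAct, colorAct_apply]⟩,
    fun σ g => (MonoidHom.commute_inl_inr σ g).map (ctriAct n),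
    MonoidHom.range_comp_inl_inf_range_comp_inr hinj,
    ⟨(MulEquiv.subgroupCongr (ctriAct n).range_comp_inl_sup_range_comp_inr).trans
      (MonoidHom.ofInjective hinj).symm⟩⟩

end Colorful
end
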